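/- (Performance difference across transition kernels) For any kernels P, P', policy π, and initial state s₀: V_π^P(s₀) − V_π^{P'}(s₀) = (1/(1−γ)) ∑_{s,a} d_π^P(s|s₀) π(a|s) ∑_{s'} (P(s'|s,a) − P'(s'|s,a)) G_π^{P'}(s,a,s'), where d_π^P(s|s₀) = (1−γ)∑_{t≥0} γ^t P_π^P(S_t = s | S_0 = s₀) is the discounted state visitation distribution. -/
import Mathlib


/-- Performance difference across transition kernels:
V_π^P(s₀) − V_π^{P'}(s₀) = (1/(1−γ)) ∑_{s,a} d_π^P(s|s₀) π(a|s)
  ∑_{s'} (P(s'|s,a) − P'(s'|s,a)) G_π^{P'}(s,a,s'). -/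
theorem performance_difference_kernels (S A : ℕ)
    (P P' : Fin S → Fin A → Fin S → ℝ) (π : Fin S → Fin A → ℝ)
    (c : Fin S → Fin A → ℝ) (γ : ℝ) (hγ : γ ∈ Set.Ioo (0 : ℝ) 1) (s₀ : Fin S)
    (hPpos : ∀ s a s', 0 ≤ P s a s') (hPsum : ∀ s a, ∑ s', P s a s' = 1)
    (hP'pos : ∀ s a s', 0 ≤ P' s a s') (hP'sum : ∀ s a, ∑ s', P' s a s' = 1)
    (hπpos : ∀ s a, 0 ≤ π s a) (hπsum : ∀ s, ∑ a, π s a = 1)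
    (V V' : Fin S → ℝ)
    (hV : ∀ s, V s = ∑ a, π s a * (c s a + γ * ∑ s', P s a s' * V s'))
    (hV' : ∀ s, V' s = ∑ a, π s a * (c s a + γ * ∑ s', P' s a s' * V' s'))
    (ρ : ℕ → Fin S → ℝ)
    (hρ0 : ∀ s, ρ 0 s = if s = s₀ then 1 else 0)
    (hρ : ∀ t s', ρ (t + 1) s' = ∑ s, ρ t s * ∑ a, π s a * P s a s')
    (d : Fin S → ℝ)
    (hd : ∀ s, d s = (1 - γ) * ∑' t : ℕ, γ ^ t * ρ t s) :
    V s₀ - V' s₀ = (1 / (1 - γ)) * ∑ s, ∑ a, d s * π s a *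
      ∑ s', (P s a s' - P' s a s') * (c s a + γ * V' s') := by
  obtain ⟨hγ0, hγ1⟩ := hγ
  have hγne : (1 : ℝ) - γ ≠ 0 := by linarith
  set Δ : Fin S → ℝ := fun s => V s - V' s with hΔ
  set f : Fin S → ℝ :=
    fun s => ∑ a, π s a * ∑ s', (P s a s' - P' s a s') * (c s a + γ * V' s') with hf
  -- inner sum simplification
  have e1 : ∀ s a, ∑ s', (P s a s' - P' s a s') * (c s a + γ * V' s')
      = γ * (∑ s', P s a s' * V' s') - γ * (∑ s', P' s a s' * V' s') := by
    intro s a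
    have : ∑ s', (P s a s' - P' s a s') * (c s a + γ * V' s')
        = ((∑ s', P s a s') * c s a - (∑ s', P' s a s') * c s a)
          + (γ * (∑ s', P s a s' * V' s') - γ * (∑ s', P' s a s' * V' s')) := by
      simp only [Finset.sum_mul, Finset.mul_sum, ← Finset.sum_sub_distrib,
        ← Finset.sum_add_distrib]
      exact Finset.sum_congr rfl fun s' _ => by ring
    rw [this, hPsum, hP'sum]; ring
  -- Claim A
  have claimA : ∀ s, Δ s = f s + γ * ∑ a, π s a * ∑ s', P s a s' * Δ s' := by
    intro s
    show V s - V' s = _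
    rw [hV s, hV' s, hf, ← Finset.sum_sub_distrib, Finset.mul_sum, ← Finset.sum_add_distrib]
    refine Finset.sum_congr rfl fun a _ => ?_
    rw [e1 s a]
    have hPΔ : ∑ s', P s a s' * Δ s'
        = (∑ s', P s a s' * V s') - (∑ s', P s a s' * V' s') := by
      rw [← Finset.sum_sub_distrib]
      exact Finset.sum_congr rfl fun s' _ => by simp only [hΔ]; ring
    rw [hPΔ]; ring
  -- properties of ρ
  have hρnn : ∀ t s, 0 ≤ ρ t s := by
    intro t
    induction t with
    | zero => intro s; rw [hρ0]; split <;> norm_num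
    | succ t ih =>
      intro s'
      rw [hρ t s']
      refine Finset.sum_nonneg fun s _ => mul_nonneg (ih s) ?_
      exact Finset.sum_nonneg fun a _ => mul_nonneg (hπpos s a) (hPpos s a s')
  have hρ1 : ∀ t, ∑ s, ρ t s = 1 := by
    intro t
    induction t with
    | zero => simp [hρ0]
    | succ t ih =>
      have : ∑ s', ρ (t+1) s' = ∑ s, ρ t s * ∑ s', ∑ a, π s a * P s a s' := by
        simp only [hρ, Finset.mul_sum]
        rw [Finset.sum_comm]
      rw [this]
      have h2 : ∀ s : Fin S, ∑ s', ∑ a, π s a * P s a s' = 1 := by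
        intro s
        rw [Finset.sum_comm]
        calc ∑ a, ∑ s', π s a * P s a s' = ∑ a, π s a * ∑ s', P s a s' := by
              simp [Finset.mul_sum]
          _ = 1 := by simp [hPsum, hπsum]
      simp only [h2, mul_one]; exact ih
  have hρle : ∀ t s, ρ t s ≤ 1 := by
    intro t s
    calc ρ t s ≤ ∑ s', ρ t s' :=
          Finset.single_le_sum (fun s' _ => hρnn t s') (Finset.mem_univ s)
      _ = 1 := hρ1 t
  set w : ℕ → ℝ := fun t => ∑ s, ρ t s * Δ s with hw
  set a : ℕ → ℝ := fun t => ∑ s, ρ t s * f s with ha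
  -- Claim B
  have claimB : ∀ t, w t = a t + γ * w (t + 1) := by
    intro t
    have h1 : γ * w (t+1) = ∑ s, ρ t s * (γ * ∑ b, π s b * ∑ s', P s b s' * Δ s') := by
      simp only [hw, hρ, Finset.sum_mul, Finset.mul_sum]
      rw [Finset.sum_comm]
      refine Finset.sum_congr rfl fun s _ => ?_
      rw [Finset.sum_comm]
      exact Finset.sum_congr rfl fun b _ => Finset.sum_congr rfl fun s' _ => by ring
    rw [h1]
    show (∑ s, ρ t s * Δ s) = (∑ s, ρ t s * f s) + _
    rw [← Finset.sum_add_distrib]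
    refine Finset.sum_congr rfl fun s _ => ?_
    rw [claimA s]; ring
  -- Claim C
  have claimC : ∀ N, w 0 = (∑ t ∈ Finset.range N, γ ^ t * a t) + γ ^ N * w N := by
    intro N
    induction N with
    | zero => simp
    | succ N ih =>
      rw [ih, Finset.sum_range_succ, claimB N]
      ring
  -- bounds
  have Mdef : ∀ (g : Fin S → ℝ) t, |∑ s, ρ t s * g s| ≤ ∑ s, |g s| := by
    intro g t
    calc |∑ s, ρ t s * g s| ≤ ∑ s, |ρ t s * g s| := Finset.abs_sum_le_sum_abs _ _
      _ ≤ ∑ s, |g s| := Finset.sum_le_sum fun s _ => by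
          rw [abs_mul, abs_of_nonneg (hρnn t s)]
          exact mul_le_of_le_one_left (abs_nonneg _) (hρle t s)
  -- tendsto γ^N * w N → 0
  have hten : Filter.Tendsto (fun N => γ ^ N * w N) Filter.atTop (nhds 0) := by
    have hg : Filter.Tendsto (fun N => γ ^ N * ∑ s, |Δ s|) Filter.atTop (nhds 0) := by
      have := (tendsto_pow_atTop_nhds_zero_of_lt_one hγ0.le hγ1).mul_const (∑ s, |Δ s|)
      simpa using this
    refine squeeze_zero_norm (fun N => ?_) hg
    rw [Real.norm_eq_abs, abs_mul, abs_pow, abs_of_nonneg hγ0.le]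
    exact mul_le_mul_of_nonneg_left (Mdef Δ N) (pow_nonneg hγ0.le N)
  -- partial sums tend to w 0
  have hpart : Filter.Tendsto (fun N => ∑ t ∈ Finset.range N, γ ^ t * a t)
      Filter.atTop (nhds (w 0)) := by
    have : (fun N => ∑ t ∈ Finset.range N, γ ^ t * a t)
        = fun N => w 0 - γ ^ N * w N := by
      funext N; rw [claimC N]; ring
    rw [this]
    simpa using (tendsto_const_nhds (x := w 0)).sub hten
  -- summability
  have hsummandle : ∀ (g : Fin S → ℝ) (s : Fin S), Summable (fun t => γ ^ t * ρ t s * g s) := by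
    intro g s
    apply Summable.mul_right
    refine Summable.of_nonneg_of_le (fun t => mul_nonneg (pow_nonneg hγ0.le t) (hρnn t s))
      (fun t => ?_) (summable_geometric_of_lt_one hγ0.le hγ1)
    exact mul_le_of_le_one_right (pow_nonneg hγ0.le t) (hρle t s)
  have hsummable : Summable (fun t => γ ^ t * a t) := by
    have : (fun t => γ ^ t * a t) = fun t => ∑ s, γ ^ t * ρ t s * f s := by
      funext t; rw [ha]; simp [Finset.mul_sum, mul_assoc]
    rw [this]
    exact (hasSum_sum fun s (_ : s ∈ Finset.univ) => (hsummandle f s).hasSum).summable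
  have htsum : ∑' t, γ ^ t * a t = w 0 :=
    tendsto_nhds_unique hsummable.hasSum.tendsto_sum_nat hpart
  -- now compute RHS
  have hw0 : w 0 = Δ s₀ := by
    simp [hw, hρ0, Finset.sum_ite_eq']
  have hRHS : ∑ s, ∑ b, d s * π s b *
      ∑ s', (P s b s' - P' s b s') * (c s b + γ * V' s')
      = ∑ s, d s * f s := by
    refine Finset.sum_congr rfl fun s _ => ?_
    rw [hf, Finset.mul_sum]
    exact Finset.sum_congr rfl fun b _ => by ring
  rw [hRHS]
  have hds : ∀ s, (1 / (1 - γ)) * (d s * f s) = ∑' t, γ ^ t * ρ t s * f s := by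
    intro s
    rw [hd s, tsum_mul_right (f := fun t => γ ^ t * ρ t s)]
    field_simp
  calc V s₀ - V' s₀ = w 0 := hw0.symm
    _ = ∑' t, γ ^ t * a t := htsum.symm
    _ = ∑' t, ∑ s, γ ^ t * ρ t s * f s := by
        congr 1; funext t; rw [ha]; simp [Finset.mul_sum, mul_assoc]
    _ = ∑ s, ∑' t, γ ^ t * ρ t s * f s := by
        rw [Summable.tsum_finsetSum fun s _ => hsummandle f s]
    _ = ∑ s, (1 / (1 - γ)) * (d s * f s) := by
        exact Finset.sum_congr rfl fun s _ => (hds s).symm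
    _ = (1 / (1 - γ)) * ∑ s, d s * f s := by rw [Finset.mul_sum]
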